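/- Let N be an odd positive integer and τ ∈ ℍ. Then the function θ₀^{(N)}(·,τ) is periodic with respect to the lattice ℤ + ℤτ: for every z ∈ ℂ such that θ₀(Nz,Nτ) ≠ 0, θ₀(N(z+1),Nτ) ≠ 0 and θ₀(N(z+τ),Nτ) ≠ 0, one has θ₀^{(N)}(z+1,τ) = θ₀^{(N)}(z,τ) and θ₀^{(N)}(z+τ,τ) = θ₀^{(N)}(z,τ). -/

import Mathlib

noncomputable section

open Complex

/-- `e2 w = e^{2πi w}`. -/
def e2 (w : ℂ) : ℂ := Complex.exp (2 * (Real.pi : ℂ) * Complex.I * w)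

/-- The theta function `θ₀(z,τ) = ∏_{n ≥ 0} (1 − e^{2πi(nτ+z)})(1 − e^{2πi((n+1)τ−z)})`. -/
def theta0 (z τ : ℂ) : ℂ :=
  ∏' n : ℕ, (1 - e2 ((n : ℂ) * τ + z)) * (1 - e2 (((n : ℂ) + 1) * τ - z))

/-- The smoothed theta function `θ₀^{(N)}(z,τ) = θ₀(z,τ)^N / θ₀(Nz,Nτ)`. -/
def theta0N (N : ℕ) (z τ : ℂ) : ℂ :=
  theta0 z τ ^ N / theta0 ((N : ℂ) * z) ((N : ℂ) * τ)

/-!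
With `q = e^{2πiτ}` and `x = e^{2πiz}`, `θ₀(z,τ) = P(x) P(q/x)` where `P(x) = ∏ₙ (1 - qⁿx)`.
Invariance under `z ↦ z + 1` is clear, and shifting the first factor of `P` gives
`P(x) = (1 - x) P(qx)`, whence `θ₀(z + τ, τ) = -x⁻¹ θ₀(z, τ)`. Applying this to `θ₀(·, τ)`
and to `θ₀(N·, Nτ)`, where the multiplier becomes `-x⁻ᴺ`, the multipliers of numerator and
denominator of `θ₀^{(N)}` agree exactly when `(-1)ᴺ = -1`.
-/

lemma e2_add (a b : ℂ) : e2 (a + b) = e2 a * e2 b := by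
  simp only [e2, ← exp_add, mul_add]

lemma e2_neg (w : ℂ) : e2 (-w) = (e2 w)⁻¹ := by
  simp only [e2, ← exp_neg, mul_neg]

lemma e2_natCast_mul (n : ℕ) (w : ℂ) : e2 (n * w) = e2 w ^ n := by
  rw [e2, e2, ← exp_nat_mul]; ring_nf

lemma e2_periodic : Function.Periodic e2 1 := fun w => by
  rw [e2_add, show e2 1 = 1 by simp [e2], mul_one]

lemma norm_e2_lt_one {w : ℂ} (hw : 0 < w.im) : ‖e2 w‖ < 1 := by
  have : 0 < 2 * Real.pi * w.im := by positivity
  simpa [e2, norm_exp, mul_re, mul_im] using this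

lemma multipliable_one_sub_geometric_mul {q : ℂ} (hq : ‖q‖ < 1) (x : ℂ) :
    Multipliable fun n : ℕ => 1 - q ^ n * x := by
  simpa only [sub_eq_add_neg] using Complex.multipliable_one_add_of_summable
    ((summable_geometric_of_norm_lt_one hq).mul_right x).neg

lemma tprod_one_sub_geometric_mul {q : ℂ} (hq : ‖q‖ < 1) (x : ℂ) :
    ∏' n : ℕ, (1 - q ^ n * x) = (1 - x) * ∏' n : ℕ, (1 - q ^ n * (q * x)) := by
  have hshift (n : ℕ) : q ^ (n + 1) * x = q ^ n * (q * x) := by ring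
  rw [tprod_eq_zero_mul'
    (by simpa only [hshift] using multipliable_one_sub_geometric_mul hq (q * x))]
  simp only [pow_zero, one_mul, hshift]

lemma theta0_eq_tprod_mul_tprod (z : ℂ) {τ : ℂ} (hτ : 0 < τ.im) :
    theta0 z τ = (∏' n : ℕ, (1 - e2 τ ^ n * e2 z)) *
      ∏' n : ℕ, (1 - e2 τ ^ n * (e2 τ * (e2 z)⁻¹)) := by
  have hq := norm_e2_lt_one hτ
  rw [theta0, ← (multipliable_one_sub_geometric_mul hq _).tprod_mul
    (multipliable_one_sub_geometric_mul hq _)]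
  congr! 3 with n
  · rw [e2_add, e2_natCast_mul]
  · rw [show ((n : ℂ) + 1) * τ - z = n * τ + (τ + -z) by ring, e2_add, e2_natCast_mul, e2_add,
      e2_neg]

lemma theta0_add_one (z τ : ℂ) : theta0 (z + 1) τ = theta0 z τ := by
  simp only [theta0, ← add_assoc, e2_periodic _, sub_add_eq_sub_sub, e2_periodic.sub_eq]

lemma theta0_add_natCast (z τ : ℂ) (n : ℕ) : theta0 (z + n) τ = theta0 z τ := by
  simpa using Function.Periodic.nat_mul (f := (theta0 · τ)) (theta0_add_one · τ) n z

lemma theta0_add_self (z : ℂ) {τ : ℂ} (hτ : 0 < τ.im) :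
    theta0 (z + τ) τ = -(e2 z)⁻¹ * theta0 z τ := by
  rw [theta0_eq_tprod_mul_tprod _ hτ, theta0_eq_tprod_mul_tprod _ hτ, e2_add]
  set q := e2 τ
  set x := e2 z
  have hq : ‖q‖ < 1 := norm_e2_lt_one hτ
  have hx : x ≠ 0 := exp_ne_zero _
  have hx' : q * (q * x)⁻¹ = x⁻¹ := by
    field_simp [show q ≠ 0 from exp_ne_zero _]
  rw [mul_comm x q, hx', tprod_one_sub_geometric_mul hq x, tprod_one_sub_geometric_mul hq x⁻¹,
    show 1 - x⁻¹ = -x⁻¹ * (1 - x) by field_simp; ring]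
  ring

theorem theta0N_periodic_general (N : ℕ) (hNodd : Odd N) (τ : ℂ) (hτ : 0 < τ.im)
    (z : ℂ) :
    theta0N N (z + 1) τ = theta0N N z τ ∧ theta0N N (z + τ) τ = theta0N N z τ := by
  have hNτ : 0 < ((N : ℂ) * τ).im := by simpa using mul_pos (Nat.cast_pos.mpr hNodd.pos) hτ
  have hxN : (e2 z ^ N)⁻¹ ≠ 0 := by simp [e2, exp_ne_zero]
  refine ⟨?_, ?_⟩
  · rw [theta0N, theta0N, theta0_add_one, mul_add, mul_one, theta0_add_natCast]
  · rw [theta0N, theta0N, theta0_add_self z hτ, mul_add, theta0_add_self _ hNτ, e2_natCast_mul,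
      mul_pow, hNodd.neg_pow, inv_pow, neg_mul, neg_mul, neg_div_neg_eq, mul_div_mul_left _ _ hxN]

/-- For odd `N`, the function `θ₀^{(N)}(·,τ)` is periodic with respect to the lattice
`ℤ + ℤτ`, at every point where the relevant denominators are nonzero. -/
theorem theta0N_periodic (N : ℕ) (hN : 0 < N) (hNodd : Odd N) (τ : ℂ) (hτ : 0 < τ.im)
    (z : ℂ)
    (h0 : theta0 ((N : ℂ) * z) ((N : ℂ) * τ) ≠ 0)
    (h1 : theta0 ((N : ℂ) * (z + 1)) ((N : ℂ) * τ) ≠ 0)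
    (h2 : theta0 ((N : ℂ) * (z + τ)) ((N : ℂ) * τ) ≠ 0) :
    theta0N N (z + 1) τ = theta0N N z τ ∧ theta0N N (z + τ) τ = theta0N N z τ :=
  theta0N_periodic_general N hNodd τ hτ z
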